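/- Let S be a shift-invariant subspace of L²(ℝ) with invariance order n (i.e., n is the maximal positive integer such that S is (1/n)ℤ-invariant). If S is invariant under translation by a real number y ≥ 1/n, then y is an integer multiple of 1/d for some divisor d of n. -/

import Mathlib

/-
The shifts `a` with `T_a S ⊆ S` form a closed additive submonoid `M` of `ℝ`
(closed because `a ↦ T_a f` is continuous on `L²`). Since `±1/n ∈ M`, Dirichlet approximation
shows `-a` is a limit of elements of `M` for every `a ∈ M`, so `M` is a closed subgroup of `ℝ`.
It is not all of `ℝ`, by maximality of `n`, hence cyclic, `M = aℤ`; then `1/n ∈ aℤ` and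
maximality again force `M = (1/n)ℤ`. So `y ∈ (1/n)ℤ`.
-/

open MeasureTheory

noncomputable section

/-- The space `L²(ℝ)` of complex-valued square-integrable functions. -/
abbrev L2 := Lp ℂ 2 (volume : Measure ℝ)

/-- The translation operator `T_a f (x) = f (x - a)` on `L²(ℝ)`. -/
def Tr (a : ℝ) : L2 → L2 :=
  Lp.compMeasurePreserving (fun x => x - a) (measurePreserving_sub_right volume a)

theorem AddSubmonoid.zsmul_mem_of_neg_mem {G : Type*} [AddGroup G] {M : AddSubmonoid G} {c : G}
    (hc : c ∈ M) (hnc : -c ∈ M) (j : ℤ) : j • c ∈ M := by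
  cases j with
  | ofNat k => simpa using nsmul_mem hc k
  | negSucc k => simpa [negSucc_zsmul] using nsmul_mem hnc (k + 1)

theorem AddSubmonoid.neg_mem_of_isClosed {M : AddSubmonoid ℝ} (hM : IsClosed (M : Set ℝ))
    {c : ℝ} (hc0 : c ≠ 0) (hc : c ∈ M) (hnc : -c ∈ M) {a : ℝ} (ha : a ∈ M) : -a ∈ M := by
  rw [← SetLike.mem_coe, ← hM.closure_eq, Metric.mem_closure_iff]
  intro ε hε
  have hc_pos : 0 < |c| := abs_pos.2 hc0
  obtain ⟨N, hN⟩ := exists_nat_one_div_lt (div_pos hε hc_pos)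
  -- Dirichlet gives `k ≥ 1` with `k • a ≈ j • c`, so `-a ≈ (k - 1) • a - j • c ∈ M`.
  obtain ⟨j, k, hk, -, hjk⟩ := Real.exists_int_int_abs_mul_sub_le (a / c) N.succ_pos
  refine ⟨(k - 1).toNat • a + (-j) • c,
    add_mem (nsmul_mem ha _) (zsmul_mem_of_neg_mem hc hnc _), ?_⟩
  have hk1 : ((k - 1).toNat : ℝ) = k - 1 := by exact_mod_cast Int.toNat_of_nonneg (by omega)
  rw [Real.dist_eq, nsmul_eq_mul, zsmul_eq_mul, hk1, Int.cast_neg]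
  calc |-a - ((k - 1) * a + -j * c)| = |c| * |k * (a / c) - j| := by
        rw [← abs_mul, ← abs_neg]; congr 1; field_simp; ring
    _ ≤ |c| * (1 / (N + 1)) := by
        gcongr
        refine hjk.trans (one_div_le_one_div_of_le (by positivity) ?_)
        push_cast; linarith
    _ < |c| * (ε / |c|) := by gcongr
    _ = ε := mul_div_cancel₀ _ hc_pos.ne'

theorem AddSubgroup.eq_zmultiples_inv_of_isClosed {G : AddSubgroup ℝ} (hG : IsClosed (G : Set ℝ))
    {n : ℕ} (hn : 0 < n) (hinv : (n : ℝ)⁻¹ ∈ G)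
    (hmax : ∀ m : ℕ, 0 < m → (m : ℝ)⁻¹ ∈ G → m ≤ n) :
    G = AddSubgroup.zmultiples (n : ℝ)⁻¹ := by
  rcases G.dense_or_cyclic with hdense | ⟨a, rfl⟩
  · have hG_top : ((n + 1 : ℕ) : ℝ)⁻¹ ∈ G := by
      rw [← SetLike.mem_coe, ← hG.closure_eq, hdense.closure_eq]; trivial
    exact absurd (hmax (n + 1) n.succ_pos hG_top) (by omega)
  rw [← AddSubgroup.zmultiples_eq_closure] at hinv hmax ⊢
  obtain ⟨j, hj⟩ := AddSubgroup.mem_zmultiples_iff.1 hinv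
  rw [zsmul_eq_mul] at hj
  have hj0 : j ≠ 0 := by
    rintro rfl
    simp only [Int.cast_zero, zero_mul] at hj
    exact (inv_pos.2 (Nat.cast_pos.2 hn)).ne hj
  have habs : ((n * j.natAbs : ℕ) : ℝ)⁻¹ = |a| := by
    have habs_hj := congrArg abs hj
    rw [abs_mul, abs_inv, Nat.abs_cast] at habs_hj
    have : |(j : ℝ)| ≠ 0 := by positivity
    push_cast [Nat.cast_natAbs]
    rw [mul_inv, ← habs_hj]
    field_simp
  have hle := hmax _ (by positivity) (habs ▸ abs_mem_iff.2 (AddSubgroup.mem_zmultiples a))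
  have hj1 : j.natAbs = 1 := by
    have := Int.natAbs_pos.2 hj0
    nlinarith
  rcases Int.natAbs_eq_iff.1 hj1 with rfl | rfl <;> simp [← hj]

theorem Tr_zero (f : L2) : Tr 0 f = f := by
  simp only [Tr, sub_zero]
  exact Lp.compMeasurePreserving_id_apply f

theorem Tr_add (a b : ℝ) (f : L2) : Tr a (Tr b f) = Tr (a + b) f := by
  rw [Tr, Tr, ← Lp.compMeasurePreserving_comp_apply]
  congr 2
  ext x
  simp only [Function.comp_apply]
  ring

theorem continuous_Tr_apply (f : L2) : Continuous fun a : ℝ => Tr a f :=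
  continuous_const.compMeasurePreservingLp
    (g := fun a => ContinuousMap.id ℝ - ContinuousMap.const ℝ a)
    (continuous_const.sub ContinuousMap.continuous_const')
    (fun a => measurePreserving_sub_right volume a) ENNReal.ofNat_ne_top

def invariantShifts (S : Submodule ℂ L2) : AddSubmonoid ℝ where
  carrier := {a | ∀ f ∈ S, Tr a f ∈ S}
  zero_mem' := fun f hf => by rwa [Tr_zero]
  add_mem' := fun ha hb f hf => by rw [← Tr_add]; exact ha _ (hb f hf)

theorem mem_invariantShifts {S : Submodule ℂ L2} {a : ℝ} :
    a ∈ invariantShifts S ↔ ∀ f ∈ S, Tr a f ∈ S :=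
  Iff.rfl

theorem isClosed_invariantShifts {S : Submodule ℂ L2} (hS : IsClosed (S : Set L2)) :
    IsClosed (invariantShifts S : Set ℝ) := by
  have : (invariantShifts S : Set ℝ) = ⋂ f ∈ S, (fun a => Tr a f) ⁻¹' S := by
    ext a
    simp only [SetLike.mem_coe, mem_invariantShifts, Set.mem_iInter, Set.mem_preimage]
  rw [this]
  exact isClosed_biInter fun f _ => hS.preimage (continuous_Tr_apply f)

theorem stmt4_general (S : Submodule ℂ L2) (hS : IsClosed (S : Set L2))
    (n : ℕ) (hn : 0 < n)
    (hninv : ∀ f ∈ S, ∀ j : ℤ, Tr ((j : ℝ) / n) f ∈ S)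
    (hmax : ∀ m : ℕ, 0 < m → (∀ f ∈ S, ∀ j : ℤ, Tr ((j : ℝ) / m) f ∈ S) → m ≤ n)
    (y : ℝ) (hyinv : ∀ f ∈ S, Tr y f ∈ S) :
    ∃ d : ℕ, d ∣ n ∧ 0 < d ∧ ∃ k : ℤ, y = (k : ℝ) / d := by
  have hclosed := isClosed_invariantShifts hS
  have hinv_n : (n : ℝ)⁻¹ ∈ invariantShifts S :=
    mem_invariantShifts.2 fun f hf => by simpa using hninv f hf 1
  have hneg_inv_n : -(n : ℝ)⁻¹ ∈ invariantShifts S :=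
    mem_invariantShifts.2 fun f hf => by simpa [neg_div] using hninv f hf (-1)
  let G : AddSubgroup ℝ :=
    { invariantShifts S with
      neg_mem' := fun ha => AddSubmonoid.neg_mem_of_isClosed hclosed (by positivity)
        hinv_n hneg_inv_n ha }
  have hG : G = AddSubgroup.zmultiples (n : ℝ)⁻¹ := by
    refine AddSubgroup.eq_zmultiples_inv_of_isClosed hclosed hn hinv_n fun m hm hmG => ?_
    refine hmax m hm fun f hf j => ?_
    simpa [div_eq_mul_inv] using zsmul_mem hmG j f hf
  have hy : y ∈ G := mem_invariantShifts.2 hyinv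
  rw [hG] at hy
  obtain ⟨k, hk⟩ := AddSubgroup.mem_zmultiples_iff.1 hy
  exact ⟨n, dvd_rfl, hn, k, by rw [← hk, zsmul_eq_mul, div_eq_mul_inv]⟩

/-- If `S` is a shift-invariant subspace of `L²(ℝ)` with invariance order `n`, and `S` is
invariant under translation by some `y ≥ 1/n`, then `y` is an integer multiple of `1/d`
for some divisor `d` of `n`. -/
theorem stmt4 (S : Submodule ℂ L2) (hS : IsClosed (S : Set L2))
    (hinv : ∀ f ∈ S, ∀ k : ℤ, Tr (k : ℝ) f ∈ S)
    (n : ℕ) (hn : 0 < n)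
    (hninv : ∀ f ∈ S, ∀ j : ℤ, Tr ((j : ℝ) / n) f ∈ S)
    (hmax : ∀ m : ℕ, 0 < m → (∀ f ∈ S, ∀ j : ℤ, Tr ((j : ℝ) / m) f ∈ S) → m ≤ n)
    (y : ℝ) (hy : (1 : ℝ) / n ≤ y) (hyinv : ∀ f ∈ S, Tr y f ∈ S) :
    ∃ d : ℕ, d ∣ n ∧ 0 < d ∧ ∃ k : ℤ, y = (k : ℝ) / d :=
  stmt4_general S hS n hn hninv hmax y hyinv
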